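/- arXiv:1010.2194 — 4 statements merged into one kernel-verified Lean document; each statement's English description precedes it below -/
import Mathlib

section
/- Let (X, g) be a pseudo-Riemannian manifold with Levi-Civita connection ∇, V a lightlike vector field with ∇_W V = α(W)·V for a 1-form α, and Z a vector field with g(V,Z) = 1, g(Z,Z) = 0. Then the 2-form d(g(V,·)) satisfies d(g(V,·))(W, Z) = α(W) for every vector field W orthogonal to V. Consequently, d(g(V,·)) = 0 if and only if α vanishes on the orthogonal complement of V. -/
/-- An abstract calculus of vector fields on a manifold: `C` plays the role of the ring of
smooth functions, `Vf` the `C`-module of vector fields, `g` a (pseudo-)metric, `bracket`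
the Lie bracket, `nabla` the Levi-Civita connection and `act` the derivation of functions
along vector fields. -/
structure VFCalc (C : Type*) [CommRing C] (Vf : Type*) [AddCommGroup Vf] [Module C Vf] where
  g : Vf →ₗ[C] Vf →ₗ[C] C
  bracket : Vf → Vf → Vf
  nabla : Vf → Vf → Vf
  act : Vf → C → C
  g_symm : ∀ A B, g A B = g B A
  compat : ∀ W A B, act W (g A B) = g (nabla W A) B + g A (nabla W B)
  torsion_free : ∀ A B, nabla A B - nabla B A = bracket A B
  nabla_smul_left : ∀ (f : C) (A B : Vf), nabla (f • A) B = f • nabla A B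
  nabla_add_left : ∀ A A' B, nabla (A + A') B = nabla A B + nabla A' B
  nabla_add_right : ∀ A B B', nabla A (B + B') = nabla A B + nabla A B'
  nabla_leibniz : ∀ (A : Vf) (f : C) (B : Vf), nabla A (f • B) = act A f • B + f • nabla A B
  act_add_right : ∀ A f f', act A (f + f') = act A f + act A f'
  act_mul : ∀ A f f', act A (f * f') = f * act A f' + f' * act A f
  act_smul_left : ∀ (f : C) A h, act (f • A) h = f * act A h
  act_add_left : ∀ A A' f, act (A + A') f = act A f + act A' f
  bracket_leibniz : ∀ A (f : C) B, bracket A (f • B) = act A f • B + f • bracket A B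

variable {C : Type*} [CommRing C] {Vf : Type*} [AddCommGroup Vf] [Module C Vf]

/-- The Lie derivative `(L_V b)(A,B)` of a (0,2)-tensor `b` along `V`. -/
def VFCalc.lieDeriv (c : VFCalc C Vf) (b : Vf → Vf → C) (V A B : Vf) : C :=
  c.act V (b A B) - b (c.bracket V A) B - b A (c.bracket V B)

/-- The curvature tensor `R(A,B)W = ∇_A∇_B W - ∇_B∇_A W - ∇_{[A,B]}W`. -/
def VFCalc.curv (c : VFCalc C Vf) (A B W : Vf) : Vf :=
  c.nabla A (c.nabla B W) - c.nabla B (c.nabla A W) - c.nabla (c.bracket A B) W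

/-- For a lightlike recurrent vector field `V` (`∇_W V = α(W)V`) and a lightlike `Z` with
`g(V,Z)=1`, `g(Z,Z)=0`, the 2-form `d(g(V,·))` satisfies `d(g(V,·))(W,Z) = α(W)` for all
`W ⟂ V`; consequently `d(g(V,·)) = 0` iff `α` vanishes on the orthogonal complement of `V`. -/
theorem dgV_eq_alpha (c : VFCalc C Vf) (V Z : Vf) (α : Vf →ₗ[C] C)
    (hrec : ∀ W, c.nabla W V = α W • V)
    (hVV : c.g V V = 0) (hVZ : c.g V Z = 1) (hZZ : c.g Z Z = 0) :
    (∀ W : Vf, c.g W V = 0 →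
      c.act W (c.g V Z) - c.act Z (c.g V W) - c.g V (c.bracket W Z) = α W) ∧
    ((∀ A B : Vf, c.act A (c.g V B) - c.act B (c.g V A) - c.g V (c.bracket A B) = 0) ↔
      (∀ W : Vf, c.g W V = 0 → α W = 0)) := by
  have key : ∀ A B : Vf,
      c.act A (c.g V B) - c.act B (c.g V A) - c.g V (c.bracket A B)
        = α A * c.g V B - α B * c.g V A := by
    intro A B
    have h1 := c.compat A V B
    have h2 := c.compat B V A
    rw [hrec] at h1 h2
    rw [← c.torsion_free A B]
    simp only [map_smul, LinearMap.smul_apply, smul_eq_mul, map_sub] at h1 h2 ⊢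
    rw [h1, h2]
    ring
  constructor
  · intro W hW
    have hVW : c.g V W = 0 := by rw [c.g_symm]; exact hW
    rw [key W Z, hVW, hVZ]
    ring
  · constructor
    · intro h W hW
      have hVW : c.g V W = 0 := by rw [c.g_symm]; exact hW
      have := h W Z
      rw [key W Z, hVW, hVZ] at this
      linear_combination this
    · intro h A B
      rw [key A B]
      have hW : c.g (c.g V B • A - c.g V A • B) V = 0 := by
        simp only [map_sub, map_smul, LinearMap.sub_apply, LinearMap.smul_apply,
          smul_eq_mul]
        rw [c.g_symm A V, c.g_symm B V]
        ring
      have := h _ hW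
      simp only [map_sub, map_smul, smul_eq_mul] at this
      linear_combination this
end

section
/- Let (X, g^L, V) be a decent spacetime: V is a lightlike vector field with ∇^L_· V = α(·)V and α vanishes on Ξ^⊥ = V^⊥. Then for any realization S of the screen bundle, the associated Riemannian (V,S)-metric g^R is bundle-like with respect to the codimension-one foliation X^⊥ tangent to Ξ^⊥, and the foliation is transversely parallelizable; conversely, if g^R is bundle-like and X^⊥ is transversely parallelizable via Z, then α|_{Ξ^⊥}=0. -/
variable {C : Type*} [CommRing C] {Vf : Type*} [AddCommGroup Vf] [Module C Vf]

/-- For a spacetime with recurrent lightlike `V` (`∇_·V = α(·)V`) and screen realization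
(with associated lightlike field `Z`, `g(V,Z)=1`, and `(V,S)`-metric `g^R`, which
satisfies `g^R(·,Z) = g^L(·,V)`), the following are equivalent: the spacetime is decent
(`α` vanishes on `Ξ^⊥ = V^⊥`), and: `g^R` is bundle-like with respect to the
codimension-one foliation tangent to `V^⊥` (i.e. `(L_W g^R)(Z,Z)=0` for all `W ∈ V^⊥`,
`Z` spanning the `g^R`-normal bundle) together with transverse parallelizability via `Z`
(i.e. `[W,Z]` remains tangent to `V^⊥`, `g^R([W,Z],Z)=0`, for all `W ∈ V^⊥`). -/
theorem decent_iff_bundleLike_and_transversallyParallelizable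
    (c : VFCalc C Vf) (V Z : Vf) (α : Vf →ₗ[C] C)
    (gR : Vf →ₗ[C] Vf →ₗ[C] C)
    (hrec : ∀ W, c.nabla W V = α W • V)
    (hVV : c.g V V = 0) (hVZ : c.g V Z = 1) (hZZ : c.g Z Z = 0)
    (hgRsymm : ∀ A B, gR A B = gR B A)
    (hgRZ : ∀ A, gR A Z = c.g A V) :
    (∀ W : Vf, c.g V W = 0 → α W = 0) ↔
      ((∀ W : Vf, c.g V W = 0 → c.lieDeriv (fun A B => gR A B) W Z Z = 0) ∧
       (∀ W : Vf, c.g V W = 0 → gR (c.bracket W Z) Z = 0)) := by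
  have actW1 : ∀ W : Vf, c.act W 1 = 0 := fun W => by
    have h := c.act_mul W 1 1
    simp only [one_mul, mul_one] at h
    exact left_eq_add.mp h
  have actW0 : ∀ W : Vf, c.act W 0 = 0 := fun W => by
    have h := c.act_add_right W 0 0
    simp only [zero_add] at h
    exact left_eq_add.mp h
  have hZV : c.g Z V = 1 := by rw [c.g_symm]; exact hVZ
  -- key computation : gR [W,Z] Z = -α W when W ⊥ V
  have key : ∀ W : Vf, c.g V W = 0 → gR (c.bracket W Z) Z = -α W := by
    intro W hW
    have hWV : c.g W V = 0 := by rw [c.g_symm]; exact hW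
    have h1 : c.g (c.nabla W Z) V = -α W := by
      have hc := c.compat W Z V
      rw [hZV, actW1, hrec] at hc
      have : (c.g Z) (α W • V) = α W := by
        rw [map_smul, smul_eq_mul, hZV, mul_one]
      rw [this] at hc
      linear_combination -hc
    have h2 : c.g (c.nabla Z W) V = 0 := by
      have hc := c.compat Z W V
      rw [hWV, actW0, hrec] at hc
      have : (c.g W) (α Z • V) = 0 := by
        rw [map_smul, smul_eq_mul, hWV, mul_zero]
      rw [this] at hc
      linear_combination -hc
    have hbr : gR (c.bracket W Z) Z = c.g (c.bracket W Z) V := hgRZ _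
    rw [hbr, ← c.torsion_free, map_sub, LinearMap.sub_apply, h1, h2, sub_zero]
  have hgRZZ : gR Z Z = 1 := by rw [hgRZ, hZV]
  constructor
  · intro hα
    constructor
    · intro W hW
      have hk := key W hW
      rw [hα W hW, neg_zero] at hk
      simp only [VFCalc.lieDeriv, hgRZZ, actW1, hk, hgRsymm Z (c.bracket W Z), hk]
      ring
    · intro W hW
      rw [key W hW, hα W hW, neg_zero]
  · rintro ⟨_, h2⟩ W hW
    have hk := key W hW
    rw [h2 W hW] at hk
    linear_combination hk
end

section
/- Let (X, g^L, V, S) be an almost decent spacetime with screen realization S and associated field Z. Then [V,Y] ∈ S for all local sections Y of S if and only if for every leaf L^⊥ of the foliation tangent to V^⊥, the vector field V is a Killing vector field of constant length for the restricted (V,S)-metric g^R|_{L^⊥}. -/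
variable {C : Type*} [CommRing C] {Vf : Type*} [AddCommGroup Vf] [Module C Vf]

/-!
On `V^⊥ = span {V} ⊕ S` the Lie derivative `L = L_V g^R` is symmetric and bilinear, so it is
determined by its values on `V` and on `S`. Since `g^R(V,V) = 1` and `[V,V] = 0`, `L(V,V) = 0`.
For `s, t ∈ S` one can replace `g^R` by `g^L` in `L(s,t)`, because `g^R` and `g^L` agree on
`V^⊥ × S` and `[V,s] ∈ V^⊥`; then `(L_V g^L)(s,t) = g^L(∇_s V, t) + g^L(s, ∇_t V) = 0` since
`∇V` is proportional to `V`. Finally `L(V,s) = -g^R(V,[V,s]) = -g^L(Z,[V,s])`, which vanishes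
exactly when `[V,s] ∈ S`. The length condition holds in any case since `g^R(V,V) = 1`.
-/

namespace VFCalc

section Calculus

variable (c : VFCalc C Vf)

theorem act_zero (A : Vf) : c.act A 0 = 0 := by
  simpa using (c.act_add_right A 0 0).symm

theorem act_one (A : Vf) : c.act A 1 = 0 := by
  simpa using c.act_mul A 1 1

theorem bracket_self (A : Vf) : c.bracket A A = 0 := by
  rw [← c.torsion_free, sub_self]

theorem bracket_add_right (A B B' : Vf) :
    c.bracket A (B + B') = c.bracket A B + c.bracket A B' := by
  simp only [← c.torsion_free, c.nabla_add_right, c.nabla_add_left]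
  abel

variable (b : Vf →ₗ[C] Vf →ₗ[C] C) (V : Vf)

theorem lieDeriv_add_left (A A' B : Vf) :
    c.lieDeriv (fun A B => b A B) V (A + A') B =
      c.lieDeriv (fun A B => b A B) V A B + c.lieDeriv (fun A B => b A B) V A' B := by
  simp only [lieDeriv, bracket_add_right, map_add, LinearMap.add_apply, c.act_add_right]
  ring

theorem lieDeriv_add_right (A B B' : Vf) :
    c.lieDeriv (fun A B => b A B) V A (B + B') =
      c.lieDeriv (fun A B => b A B) V A B + c.lieDeriv (fun A B => b A B) V A B' := by
  simp only [lieDeriv, bracket_add_right, map_add, c.act_add_right]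
  ring

theorem lieDeriv_smul_left (f : C) (A B : Vf) :
    c.lieDeriv (fun A B => b A B) V (f • A) B = f * c.lieDeriv (fun A B => b A B) V A B := by
  simp only [lieDeriv, c.bracket_leibniz, map_add, map_smul, LinearMap.add_apply,
    LinearMap.smul_apply, smul_eq_mul, c.act_mul]
  ring

theorem lieDeriv_smul_right (f : C) (A B : Vf) :
    c.lieDeriv (fun A B => b A B) V A (f • B) = f * c.lieDeriv (fun A B => b A B) V A B := by
  simp only [lieDeriv, c.bracket_leibniz, map_add, map_smul, smul_eq_mul, c.act_mul]
  ring

theorem lieDeriv_comm {b : Vf →ₗ[C] Vf →ₗ[C] C} (hb : ∀ A B, b A B = b B A) (A B : Vf) :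
    c.lieDeriv (fun A B => b A B) V A B = c.lieDeriv (fun A B => b A B) V B A := by
  simp only [lieDeriv, hb A B, hb (c.bracket V A) B, hb A (c.bracket V B)]
  ring

theorem lieDeriv_self_left (s : Vf) :
    c.lieDeriv (fun A B => b A B) V V s = c.act V (b V s) - b V (c.bracket V s) := by
  simp [lieDeriv, bracket_self]

theorem lieDeriv_g (A B : Vf) :
    c.lieDeriv (fun A B => c.g A B) V A B = c.g (c.nabla A V) B + c.g A (c.nabla B V) := by
  simp only [lieDeriv, c.compat, ← c.torsion_free, map_sub, LinearMap.sub_apply]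
  ring

end Calculus

section Recurrent

variable {c : VFCalc C Vf} {V : Vf} {α : Vf → C}

theorem g_bracket_eq_zero (hrec : ∀ W, c.nabla W V = α W • V) (hVV : c.g V V = 0) {W : Vf}
    (hW : c.g V W = 0) : c.g V (c.bracket V W) = 0 := by
  have hVW : c.g V (c.nabla V W) = 0 := by
    simpa [hrec, hW, act_zero] using (c.compat V V W).symm
  rw [← c.torsion_free, map_sub, hVW, hrec, map_smul, hVV, smul_zero, sub_zero]

theorem lieDeriv_g_eq_zero (hrec : ∀ W, c.nabla W V = α W • V) {A B : Vf} (hA : c.g V A = 0)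
    (hB : c.g V B = 0) : c.lieDeriv (fun A B => c.g A B) V A B = 0 := by
  rw [lieDeriv_g, hrec, hrec, map_smul, LinearMap.smul_apply, hB, map_smul, c.g_symm A, hA,
    smul_zero, smul_zero, add_zero]

end Recurrent

theorem exists_eq_smul_add_of_mem_sup {V W : Vf} {S : Submodule C Vf}
    (hW : W ∈ Submodule.span C {V} ⊔ S) : ∃ a : C, ∃ s ∈ S, W = a • V + s := by
  obtain ⟨y, hy, s, hs, rfl⟩ := Submodule.mem_sup.mp hW
  obtain ⟨a, rfl⟩ := Submodule.mem_span_singleton.mp hy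
  exact ⟨a, s, hs, rfl⟩

section Screen

variable {c : VFCalc C Vf} {V Z : Vf} {S : Submodule C Vf} {gR : Vf →ₗ[C] Vf →ₗ[C] C}

theorem mem_screen_of_g_eq_zero (hperp : ∀ W, c.g V W = 0 → W ∈ Submodule.span C {V} ⊔ S)
    (hVZ : c.g V Z = 1) (hZS : ∀ s ∈ S, c.g Z s = 0) {W : Vf} (hVW : c.g V W = 0)
    (hZW : c.g Z W = 0) : W ∈ S := by
  obtain ⟨a, s, hs, rfl⟩ := exists_eq_smul_add_of_mem_sup (hperp W hVW)
  have ha : a = 0 := by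
    simpa [c.g_symm Z V, hVZ, hZS s hs] using hZW
  simpa [ha] using hs

theorem gR_self_left_eq_g (hperp : ∀ W, c.g V W = 0 → W ∈ Submodule.span C {V} ⊔ S)
    (hVZ : c.g V Z = 1) (hZS : ∀ s ∈ S, c.g Z s = 0) (hgRVV : gR V V = 1)
    (hgRVS : ∀ s ∈ S, gR V s = 0) {W : Vf} (hW : c.g V W = 0) : gR V W = c.g Z W := by
  obtain ⟨a, s, hs, rfl⟩ := exists_eq_smul_add_of_mem_sup (hperp W hW)
  simp [c.g_symm Z V, hVZ, hZS s hs, hgRVV, hgRVS s hs]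

theorem gR_eq_g_of_mem_screen (hperp : ∀ W, c.g V W = 0 → W ∈ Submodule.span C {V} ⊔ S)
    (hVS : ∀ s ∈ S, c.g V s = 0) (hgRVS : ∀ s ∈ S, gR V s = 0)
    (hgRS : ∀ s ∈ S, ∀ t ∈ S, gR s t = c.g s t) {W t : Vf} (hW : c.g V W = 0) (ht : t ∈ S) :
    gR W t = c.g W t := by
  obtain ⟨a, s, hs, rfl⟩ := exists_eq_smul_add_of_mem_sup (hperp W hW)
  simp [hVS t ht, hgRVS t ht, hgRS s hs t ht]

theorem lieDeriv_self_left_eq_zero_iff (hperp : ∀ W, c.g V W = 0 → W ∈ Submodule.span C {V} ⊔ S)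
    {α : Vf → C} (hrec : ∀ W, c.nabla W V = α W • V) (hVV : c.g V V = 0) (hVZ : c.g V Z = 1)
    (hVS : ∀ s ∈ S, c.g V s = 0) (hZS : ∀ s ∈ S, c.g Z s = 0) (hgRVV : gR V V = 1)
    (hgRVS : ∀ s ∈ S, gR V s = 0) {s : Vf} (hs : s ∈ S) :
    c.lieDeriv (fun A B => gR A B) V V s = 0 ↔ c.bracket V s ∈ S := by
  have hbr := g_bracket_eq_zero hrec hVV (hVS s hs)
  rw [lieDeriv_self_left, hgRVS s hs, act_zero, zero_sub, neg_eq_zero,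
    gR_self_left_eq_g hperp hVZ hZS hgRVV hgRVS hbr]
  exact ⟨mem_screen_of_g_eq_zero hperp hVZ hZS hbr, hZS _⟩

theorem lieDeriv_screen_eq_zero (hperp : ∀ W, c.g V W = 0 → W ∈ Submodule.span C {V} ⊔ S)
    {α : Vf → C} (hrec : ∀ W, c.nabla W V = α W • V) (hVV : c.g V V = 0)
    (hVS : ∀ s ∈ S, c.g V s = 0) (hgRsymm : ∀ A B, gR A B = gR B A)
    (hgRVS : ∀ s ∈ S, gR V s = 0) (hgRS : ∀ s ∈ S, ∀ t ∈ S, gR s t = c.g s t) {s t : Vf}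
    (hs : s ∈ S) (ht : t ∈ S) : c.lieDeriv (fun A B => gR A B) V s t = 0 := by
  have hgR {W u : Vf} (hW : c.g V W = 0) (hu : u ∈ S) : gR W u = c.g W u :=
    gR_eq_g_of_mem_screen hperp hVS hgRVS hgRS hW hu
  have hgRg : c.lieDeriv (fun A B => gR A B) V s t = c.lieDeriv (fun A B => c.g A B) V s t := by
    simp only [lieDeriv, hgRS s hs t ht, hgR (g_bracket_eq_zero hrec hVV (hVS s hs)) ht,
      hgRsymm s, c.g_symm s, hgR (g_bracket_eq_zero hrec hVV (hVS t ht)) hs]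
  rw [hgRg, lieDeriv_g_eq_zero hrec (hVS s hs) (hVS t ht)]

theorem lieDeriv_eq_zero_of_orthogonal
    (hperp : ∀ W, c.g V W = 0 → W ∈ Submodule.span C {V} ⊔ S)
    (hgRsymm : ∀ A B, gR A B = gR B A) (hLVV : c.lieDeriv (fun A B => gR A B) V V V = 0)
    (hLVS : ∀ s ∈ S, c.lieDeriv (fun A B => gR A B) V V s = 0)
    (hLSS : ∀ s ∈ S, ∀ t ∈ S, c.lieDeriv (fun A B => gR A B) V s t = 0) {W₁ W₂ : Vf}
    (h₁ : c.g V W₁ = 0) (h₂ : c.g V W₂ = 0) : c.lieDeriv (fun A B => gR A B) V W₁ W₂ = 0 := by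
  obtain ⟨a, s, hs, rfl⟩ := exists_eq_smul_add_of_mem_sup (hperp W₁ h₁)
  obtain ⟨b, t, ht, rfl⟩ := exists_eq_smul_add_of_mem_sup (hperp W₂ h₂)
  simp only [lieDeriv_add_left, lieDeriv_add_right, lieDeriv_smul_left, lieDeriv_smul_right,
    lieDeriv_comm c V hgRsymm s V, hLVV, hLVS s hs, hLVS t ht, hLSS s hs t ht]
  ring

end Screen

end VFCalc

theorem almostHorizontal_iff_isometricFlow_general (c : VFCalc C Vf) (V Z : Vf)
    (S : Submodule C Vf) (α : Vf →ₗ[C] C) (gR : Vf →ₗ[C] Vf →ₗ[C] C)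
    (hrec : ∀ W, c.nabla W V = α W • V)
    (hVV : c.g V V = 0) (hVZ : c.g V Z = 1)
    (hVS : ∀ s ∈ S, c.g V s = 0) (hZS : ∀ s ∈ S, c.g Z s = 0)
    (hperp : ∀ W : Vf, c.g V W = 0 → W ∈ Submodule.span C {V} ⊔ S)
    (hgRsymm : ∀ A B, gR A B = gR B A)
    (hgRVV : gR V V = 1)
    (hgRVS : ∀ s ∈ S, gR V s = 0)
    (hgRS : ∀ s ∈ S, ∀ t ∈ S, gR s t = c.g s t) :
    (∀ Y ∈ S, c.bracket V Y ∈ S) ↔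
      ((∀ W₁ W₂ : Vf, c.g V W₁ = 0 → c.g V W₂ = 0 →
          c.lieDeriv (fun A B => gR A B) V W₁ W₂ = 0) ∧
       (∀ W : Vf, c.g V W = 0 → c.act W (gR V V) = 0)) := by
  have hLVV : c.lieDeriv (fun A B => gR A B) V V V = 0 := by
    rw [c.lieDeriv_self_left, hgRVV, c.act_one, c.bracket_self, map_zero, sub_zero]
  have hLVS {s : Vf} (hs : s ∈ S) :=
    VFCalc.lieDeriv_self_left_eq_zero_iff hperp hrec hVV hVZ hVS hZS hgRVV hgRVS hs
  have hLSS {s t : Vf} (hs : s ∈ S) (ht : t ∈ S) :=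
    VFCalc.lieDeriv_screen_eq_zero hperp hrec hVV hVS hgRsymm hgRVS hgRS hs ht
  constructor
  · intro hAH
    refine ⟨fun W₁ W₂ h₁ h₂ => ?_, fun W _ => by rw [hgRVV, c.act_one]⟩
    exact VFCalc.lieDeriv_eq_zero_of_orthogonal hperp hgRsymm hLVV
      (fun s hs => (hLVS hs).2 (hAH s hs)) (fun s hs t ht => hLSS hs ht) h₁ h₂
  · rintro ⟨hKilling, -⟩ Y hY
    exact (hLVS hY).1 (hKilling V Y hVV (hVS Y hY))

/-- For an almost decent spacetime with screen realization `S` and associated lightlike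
field `Z`, the almost horizontality condition `[V,Y] ∈ S` for all sections `Y` of `S`
holds if and only if, on each leaf of the foliation tangent to `V^⊥`, the vector field
`V` is a Killing field of constant length for the restricted `(V,S)`-metric `g^R`:
`(L_V g^R)(W₁,W₂) = 0` for all `W₁,W₂ ∈ V^⊥` and `g^R(V,V)` is constant along `V^⊥`. -/
theorem almostHorizontal_iff_isometricFlow (c : VFCalc C Vf) (V Z : Vf)
    (S : Submodule C Vf) (α : Vf →ₗ[C] C) (gR : Vf →ₗ[C] Vf →ₗ[C] C)
    (hrec : ∀ W, c.nabla W V = α W • V)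
    (hVV : c.g V V = 0) (hVZ : c.g V Z = 1) (hZZ : c.g Z Z = 0)
    (hVS : ∀ s ∈ S, c.g V s = 0) (hZS : ∀ s ∈ S, c.g Z s = 0)
    (hperp : ∀ W : Vf, c.g V W = 0 → W ∈ Submodule.span C {V} ⊔ S)
    (hgRsymm : ∀ A B, gR A B = gR B A)
    (hgRVV : gR V V = 1) (hgRZZ : gR Z Z = 1) (hgRVZ : gR V Z = 0)
    (hgRVS : ∀ s ∈ S, gR V s = 0) (hgRZS : ∀ s ∈ S, gR Z s = 0)
    (hgRS : ∀ s ∈ S, ∀ t ∈ S, gR s t = c.g s t) :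
    (∀ Y ∈ S, c.bracket V Y ∈ S) ↔
      ((∀ W₁ W₂ : Vf, c.g V W₁ = 0 → c.g V W₂ = 0 →
          c.lieDeriv (fun A B => gR A B) V W₁ W₂ = 0) ∧
       (∀ W : Vf, c.g V W = 0 → c.act W (gR V V) = 0)) :=
  almostHorizontal_iff_isometricFlow_general c V Z S α gR hrec hVV hVZ hVS hZS hperp hgRsymm hgRVV
    hgRVS hgRS
end

section
/- Let G be a Lie algebra admitting a decomposition g = g₁ ⊕ ⋯ ⊕ g_ℓ into ideals acting on ℝ^q = F₁ ⊕ ⋯ ⊕ F_ℓ with each g_j acting irreducibly on F_j (dim F_j ≥ 1) and trivially on F_i for i ≠ j, with ℓ ≥ 1 and every F_j nontrivially acted upon. Suppose ψ : g → ℝ^{q−ℓ'} is a linear map vanishing on [g,g] whose image spans a subspace on which g acts trivially. If g acts trivially on no nonzero subspace of ℝ^q, then the 'coupled type 4' holonomy algebra {[[0, ψ(A)ᵀ, wᵀ, 0],[0,0,0,−ψ(A)],[0,0,A,−w],[0,0,0,0]] : A ∈ g, w ∈ ℝ^{ℓ'}} with 0 < ℓ' < q cannot occur, since it requires g ⊂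 so(ℓ') to act trivially on ℝ^{q−ℓ'} ≠ 0. -/
/-- Exclusion of the coupled (Bérard-Bergery–Ikemakhen type 4) holonomy algebra: if the
screen holonomy algebra `g` acts on `ℝ^q = ℝ^{ℓ'} ⊕ ℝ^{q-ℓ'}` through `so(ℓ')` on the
first factor and trivially on the second (encoded below with `q = l + m`, `m = q - ℓ' > 0`),
with a linear map `ψ : g → ℝ^{q-ℓ'}` vanishing on `[g,g]` whose image spans a subspace
acted on trivially, while `g` acts trivially on no nonzero subspace of `ℝ^q`, then this
situation cannot occur. -/
theorem type4_cannot_occur {g : Type*} [LieRing g] [LieAlgebra ℝ g]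
    {l m : ℕ} (hm : 0 < m)
    (ρ : g →ₗ[ℝ] ((Fin l → ℝ) × (Fin m → ℝ)) →ₗ[ℝ] ((Fin l → ℝ) × (Fin m → ℝ)))
    -- `g` acts through `so(ℓ')` on the first factor: it preserves it and is skew there
    (hfirst : ∀ x : g, ∀ u : Fin l → ℝ, (ρ x (u, 0)).2 = 0)
    (hskew : ∀ x : g, ∀ u u' : Fin l → ℝ,
      Finset.univ.sum (fun i => (ρ x (u, 0)).1 i * u' i)
        + Finset.univ.sum (fun i => u i * (ρ x (u', 0)).1 i) = 0)
    -- `g` acts trivially on the second factor `ℝ^{q-ℓ'}`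
    (htriv : ∀ x : g, ∀ v : Fin m → ℝ, ρ x (0, v) = 0)
    -- the map `ψ` vanishing on `[g,g]`
    (ψ : g →ₗ[ℝ] (Fin m → ℝ)) (hψ : ∀ x y : g, ψ ⁅x, y⁆ = 0)
    -- `g` acts trivially on no nonzero subspace of `ℝ^q`
    (hno : ∀ W : Submodule ℝ ((Fin l → ℝ) × (Fin m → ℝ)),
      (∀ x : g, ∀ w ∈ W, ρ x w = 0) → W = ⊥) :
    False := by
  have h := hno ((⊥ : Submodule ℝ (Fin l → ℝ)).prod ⊤) (by
    rintro x ⟨w1, w2⟩ hw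
    have h1 : w1 = 0 := hw.1
    subst h1
    exact htriv x w2)
  have hmem : ((0 : Fin l → ℝ), (fun _ => 1 : Fin m → ℝ)) ∈
      (⊥ : Submodule ℝ (Fin l → ℝ)).prod (⊤ : Submodule ℝ (Fin m → ℝ)) :=
    ⟨rfl, trivial⟩
  rw [h] at hmem
  have : (fun _ => 1 : Fin m → ℝ) = 0 := (Prod.mk.injEq _ _ _ _).mp hmem |>.2
  have := congrFun this ⟨0, hm⟩
  norm_num at this
end
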